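/- Let G be a profinite group and g ∈ G an element having a countable Engel sink. Then there exist positive integers i, k, an open normal subgroup N of G, and b ∈ G such that [[nb, ᵢg], g^k] = 1 for all n ∈ N. -/

import Mathlib

/-- The left-normed iterated commutator `[x, ₙg]`: `engel g x 0 = x` and
`engel g x (n+1) = [engel g x n, g] = (engel g x n)⁻¹ * g⁻¹ * (engel g x n) * g`. -/
def engel {G : Type*} [Group G] (g x : G) : ℕ → G
  | 0 => x
  | n + 1 => (engel g x n)⁻¹ * g⁻¹ * engel g x n * g

/-- `E` is an Engel sink of `g`: for every `x` all sufficiently long commutators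
`[x, ₙg]` lie in `E`. -/
def IsEngelSink {G : Type*} [Group G] (g : G) (E : Set G) : Prop :=
  ∀ x : G, ∃ N : ℕ, ∀ n : ℕ, N ≤ n → engel g x n ∈ E

/-!
By Baire's theorem one of the countably many closed sets `{x | [x, ⱼg] = e}` (`e ∈ E`) has
interior, so `[x, ⱼg] = e` on a coset `N b` of an open normal subgroup. Since `N` has finite
index, `h = g ^ k ∈ N` for `k = |G : N|`. Conjugation by `h` maps `N b` into itself and, as `h`
commutes with `g`, commutes with `x ↦ [x, ⱼg]`; hence `h e h⁻¹ = e`. Then `h` also commutes with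
`[e, g] = [n b, ⱼ₊₁g]`.
-/

section Algebra

variable {G : Type*} [Group G]

lemma engel_add (g x : G) (m n : ℕ) : engel g x (m + n) = engel g (engel g x m) n := by
  induction n with
  | zero => rfl
  | succ n ih => rw [← Nat.add_assoc, engel, engel, ih]

lemma map_engel {H : Type*} [Group H] (φ : G →* H) (g x : G) (n : ℕ) :
    engel (φ g) (φ x) n = φ (engel g x n) := by
  induction n with
  | zero => rfl
  | succ n ih => simp only [engel, ih, map_mul, map_inv]

lemma engel_conj_of_commute {g h : G} (hgh : Commute g h) (x : G) (n : ℕ) :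
    engel g (MulAut.conj h x) n = MulAut.conj h (engel g x n) := by
  simpa [hgh.symm.mul_inv_cancel] using map_engel (MulAut.conj h).toMonoidHom g x n

lemma Commute.engel_left {g h x : G} (hx : Commute x h) (hg : Commute g h) (n : ℕ) :
    Commute (engel g x n) h := by
  induction n with
  | zero => exact hx
  | succ n ih => exact ((ih.inv_left.mul_left hg.inv_left).mul_left ih).mul_left hg

lemma Commute.inv_mul_inv_mul_mul_eq_one {a b : G} (hab : Commute a b) :
    a⁻¹ * b⁻¹ * a * b = 1 := by
  rw [mul_assoc _ a, hab.eq]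
  group

lemma Subgroup.Normal.commute_of_engel_eq_on_coset {N : Subgroup G} (hN : N.Normal)
    {g h b e : G} {j : ℕ} (hh : h ∈ N) (hgh : Commute g h)
    (hconst : ∀ n ∈ N, engel g (n * b) j = e) : Commute e h := by
  have hmem : h * (b * h⁻¹ * b⁻¹) ∈ N := N.mul_mem hh (hN.conj_mem _ (N.inv_mem hh) b)
  have hconj : engel g (MulAut.conj h b) j = h * e * h⁻¹ := by
    rw [engel_conj_of_commute hgh, ← one_mul b, hconst 1 N.one_mem, MulAut.conj_apply]
  have key : h * e * h⁻¹ = e := by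
    rw [← hconj, ← hconst _ hmem, MulAut.conj_apply]
    group
  exact (mul_inv_eq_iff_eq_mul.mp key).symm

end Algebra

section Topology

variable {G : Type*} [Group G] [TopologicalSpace G] [IsTopologicalGroup G]

lemma continuous_engel (g : G) (n : ℕ) : Continuous fun x : G => engel g x n := by
  induction n with
  | zero => exact continuous_id
  | succ n ih =>
    show Continuous fun x : G => (engel g x n)⁻¹ * g⁻¹ * engel g x n * g
    fun_prop

lemma IsEngelSink.exists_isOpen_engel_eq [T1Space G] [BaireSpace G] {g : G} {E : Set G}
    (hE : IsEngelSink g E) (hcount : E.Countable) :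
    ∃ (j : ℕ) (e : G) (U : Set G), IsOpen U ∧ U.Nonempty ∧ ∀ x ∈ U, engel g x j = e := by
  have : Countable E := hcount.to_subtype
  let C : ℕ × E → Set G := fun p => (fun x => engel g x p.1) ⁻¹' {(p.2 : G)}
  have hclosed : ∀ p, IsClosed (C p) := fun p =>
    isClosed_singleton.preimage (continuous_engel g p.1)
  have hcover : ⋃ p, C p = Set.univ := by
    refine Set.eq_univ_of_forall fun x => Set.mem_iUnion.mpr ?_
    obtain ⟨n, hn⟩ := hE x
    exact ⟨(n, ⟨_, hn n le_rfl⟩), rfl⟩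
  obtain ⟨⟨j, e⟩, hne⟩ := nonempty_interior_of_iUnion_of_closed hclosed hcover
  exact ⟨j, e, interior (C (j, e)), isOpen_interior, hne,
    fun x hx => (interior_subset hx : x ∈ C (j, e))⟩

lemma exists_openNormalSubgroup_mul_mem [CompactSpace G] [TotallyDisconnectedSpace G]
    {U : Set G} (hU : IsOpen U) {b : G} (hb : b ∈ U) :
    ∃ N : OpenNormalSubgroup G, ∀ n ∈ N, n * b ∈ U := by
  obtain ⟨N, hN⟩ := ProfiniteGrp.exist_openNormalSubgroup_sub_open_nhds_of_one
    (hU.preimage (continuous_mul_const b)) (by simpa using hb)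
  exact ⟨N, fun n hn => hN hn⟩

end Topology

theorem profinite_countable_sink_commutator_power_general
    {G : Type*} [Group G] [TopologicalSpace G] [IsTopologicalGroup G]
    [CompactSpace G] [TotallyDisconnectedSpace G]
    (g : G) (E : Set G) (hcount : E.Countable) (hE : IsEngelSink g E) :
    ∃ (i k : ℕ) (N : Subgroup G) (b : G), 1 ≤ i ∧ 1 ≤ k ∧ N.Normal ∧ IsOpen (N : Set G) ∧
      ∀ n ∈ N,
        (engel g (n * b) i)⁻¹ * (g ^ k)⁻¹ * engel g (n * b) i * g ^ k = 1 := by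
  obtain ⟨j, e, U, hU, ⟨b, hb⟩, hconst⟩ := hE.exists_isOpen_engel_eq hcount
  obtain ⟨N, hN⟩ := exists_openNormalSubgroup_mul_mem hU hb
  have hk : N.toSubgroup.index ≠ 0 := Subgroup.index_ne_zero_of_finite
  have he : Commute e (g ^ N.toSubgroup.index) :=
    N.isNormal'.commute_of_engel_eq_on_coset (Subgroup.pow_index_mem _ g)
      (Commute.self_pow g _) fun n hn => hconst _ (hN n hn)
  refine ⟨j + 1, _, N.toSubgroup, b, j.succ_pos, Nat.one_le_iff_ne_zero.mpr hk, N.isNormal',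
    N.isOpen', fun n hn => ?_⟩
  rw [engel_add, hconst _ (hN n hn)]
  exact (he.engel_left (Commute.self_pow g _) 1).inv_mul_inv_mul_mul_eq_one

/-- Let `G` be a profinite group and `g ∈ G` an element with a countable Engel sink.
Then there are positive integers `i, k`, an open normal subgroup `N` and `b ∈ G` such
that `[[n*b, ᵢg], g^k] = 1` for all `n ∈ N`. -/
theorem profinite_countable_sink_commutator_power
    {G : Type*} [Group G] [TopologicalSpace G] [IsTopologicalGroup G]
    [CompactSpace G] [T2Space G] [TotallyDisconnectedSpace G]
    (g : G) (E : Set G) (hcount : E.Countable) (hE : IsEngelSink g E) :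
    ∃ (i k : ℕ) (N : Subgroup G) (b : G), 1 ≤ i ∧ 1 ≤ k ∧ N.Normal ∧ IsOpen (N : Set G) ∧
      ∀ n ∈ N,
        (engel g (n * b) i)⁻¹ * (g ^ k)⁻¹ * engel g (n * b) i * g ^ k = 1 :=
  profinite_countable_sink_commutator_power_general g E hcount hE
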